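/- arXiv:2305.01310 — 7 statements merged into one kernel-verified Lean document; each statement's English description precedes it below -/
import Mathlib

section
/- A monotone function f from finite subsets of U to the nonnegative reals with f(∅)=0 is accountable (i.e., for every nonempty finite X ⊆ U there exists e ∈ X with f(X \ {e}) ≥ f(X) - f(X)/|X|) if and only if for every finite X ⊆ U with |X| = n ≥ 1 there exists an ordering (e₁,…,eₙ) of X such that f({e₁,…,eᵢ}) ≥ (i/n)·f(X) for all i ∈ {1,…,n}. -/
/-- A monotone nonnegative set function with `f ∅ = 0` is accountable iff every finite
set admits an ordering whose prefixes carry proportional value. -/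
theorem accountable_iff_good_ordering {U : Type*} [DecidableEq U] (f : Finset U → ℝ)
    (hmono : ∀ A B : Finset U, A ⊆ B → f A ≤ f B)
    (hnonneg : ∀ A : Finset U, 0 ≤ f A) (hempty : f ∅ = 0) :
    (∀ X : Finset U, X.Nonempty →
        ∃ e ∈ X, f (X.erase e) ≥ f X - f X / X.card) ↔
    (∀ X : Finset U, ∀ n : ℕ, 1 ≤ n → X.card = n →
        ∃ e : ℕ → U, Finset.image e (Finset.range n) = X ∧
          Set.InjOn e (Finset.range n) ∧
          ∀ i : ℕ, 1 ≤ i → i ≤ n →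
            f (Finset.image e (Finset.range i)) ≥ (i : ℝ) / n * f X) := by
  constructor
  · intro hacc X n
    induction n generalizing X with
    | zero => omega
    | succ m ih =>
      intro _ hcard
      rcases Nat.eq_zero_or_pos m with hm | hm
      · subst hm
        obtain ⟨x, hx⟩ := Finset.card_eq_one.mp hcard
        refine ⟨fun _ => x, ?_, ?_, ?_⟩
        · simp [hx]
        · intro a ha b hb _
          simp only [Finset.coe_range, Set.mem_Iio] at ha hb
          omega
        · intro i h1 h2
          interval_cases i
          simp [hx]
      · have hne : X.Nonempty := Finset.card_pos.mp (by omega)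
        obtain ⟨a, haX, hfa⟩ := hacc X hne
        have hcard' : (X.erase a).card = m := by
          rw [Finset.card_erase_of_mem haX, hcard]; omega
        obtain ⟨e', he'img, he'inj, he'pref⟩ := ih (X.erase a) hm hcard'
        have hanotin : a ∉ Finset.image e' (Finset.range m) := by
          rw [he'img]; exact Finset.notMem_erase a X
        refine ⟨fun i => if i = m then a else e' i, ?_, ?_, ?_⟩
        · rw [Finset.range_add_one, Finset.image_insert]
          have : Finset.image (fun i => if i = m then a else e' i) (Finset.range m)
              = Finset.image e' (Finset.range m) := by
            apply Finset.image_congr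
            intro x hx
            simp only [Finset.mem_coe, Finset.mem_range] at hx
            simp [Nat.ne_of_lt hx]
          simp [this, he'img, Finset.insert_erase haX]
        · intro x hx y hy hxy
          simp only [Finset.coe_range, Set.mem_Iio] at hx hy
          by_cases hxm : x = m <;> by_cases hym : y = m
          · omega
          · simp only [if_pos hxm, if_neg hym] at hxy
            exfalso; apply hanotin
            exact hxy ▸ Finset.mem_image_of_mem e' (Finset.mem_range.mpr (by omega))
          · simp only [if_neg hxm, if_pos hym] at hxy
            exfalso; apply hanotin
            exact hxy ▸ Finset.mem_image_of_mem e' (Finset.mem_range.mpr (by omega))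
          · simp only [if_neg hxm, if_neg hym] at hxy
            exact he'inj (by simpa using Nat.lt_of_le_of_ne (by omega) hxm)
              (by simpa using Nat.lt_of_le_of_ne (by omega) hym) hxy
        · intro i h1 h2
          have hprefix : ∀ j : ℕ, j ≤ m →
              Finset.image (fun i => if i = m then a else e' i) (Finset.range j)
              = Finset.image e' (Finset.range j) := by
            intro j hj
            apply Finset.image_congr
            intro x hx
            simp only [Finset.mem_coe, Finset.mem_range] at hx
            simp [Nat.ne_of_lt (by omega : x < m)]
          have hm1 : (0:ℝ) < (m:ℝ) := by exact_mod_cast hm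
          have hm2 : (0:ℝ) < (m:ℝ) + 1 := by positivity
          have hfe : f (X.erase a) ≥ (m : ℝ) / (m + 1) * f X := by
            rw [hcard] at hfa
            push_cast at hfa ⊢
            have : f X - f X / ((m:ℝ) + 1) = (m : ℝ) / (m + 1) * f X := by
              field_simp; ring
            linarith [this ▸ hfa]
          rcases Nat.lt_or_ge i (m + 1) with hi | hi
          · have him : i ≤ m := by omega
            rw [hprefix i him]
            have := he'pref i h1 him
            have key : (i : ℝ) / m * f (X.erase a) ≥ (i : ℝ) / m * ((m : ℝ) / (m + 1) * f X) := by
              apply mul_le_mul_of_nonneg_left hfe (by positivity)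
            push_cast
            have heq : (i : ℝ) / m * ((m : ℝ) / (m + 1) * f X) = (i : ℝ) / (m + 1) * f X := by
              field_simp
            calc (i : ℝ) / ((m:ℝ) + 1) * f X = (i : ℝ) / m * ((m : ℝ) / (m + 1) * f X) := heq.symm
              _ ≤ (i : ℝ) / m * f (X.erase a) := key
              _ ≤ f (Finset.image e' (Finset.range i)) := this
          · have hieq : i = m + 1 := by omega
            subst hieq
            have himg : Finset.image (fun i => if i = m then a else e' i)
                (Finset.range (m+1)) = X := by
              rw [Finset.range_add_one, Finset.image_insert]
              have : Finset.image (fun i => if i = m then a else e' i) (Finset.range m)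
                  = Finset.image e' (Finset.range m) := hprefix m le_rfl
              simp [this, he'img, Finset.insert_erase haX]
            rw [himg]
            have : ((m:ℝ) + 1) / ((m:ℝ) + 1) = 1 := div_self (ne_of_gt hm2)
            push_cast
            rw [this, one_mul]
  · intro hord X hne
    have hc : 1 ≤ X.card := Finset.card_pos.mpr hne
    rcases Nat.lt_or_ge X.card 2 with h2 | h2
    · have h1 : X.card = 1 := by omega
      obtain ⟨x, hx⟩ := Finset.card_eq_one.mp h1
      refine ⟨x, by simp [hx], ?_⟩
      rw [hx]
      simp [hempty]
    · set n := X.card with hn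
      obtain ⟨e, himg, hinj, hpref⟩ := hord X n hc rfl
      have hn1 : n - 1 < n := by omega
      refine ⟨e (n-1), ?_, ?_⟩
      · rw [← himg]
        exact Finset.mem_image_of_mem e (Finset.mem_range.mpr hn1)
      · have hanotin : e (n-1) ∉ Finset.image e (Finset.range (n-1)) := by
          intro hmem
          obtain ⟨j, hj, hje⟩ := Finset.mem_image.mp hmem
          rw [Finset.mem_range] at hj
          have := hinj (by simp; omega) (by simp [hn1]) hje
          omega
        have herase : X.erase (e (n-1)) = Finset.image e (Finset.range (n-1)) := by
          rw [← himg]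
          have : Finset.range n = insert (n-1) (Finset.range (n-1)) := by
            rw [← Finset.range_add_one]; congr 1; omega
          rw [this, Finset.image_insert, Finset.erase_insert hanotin]
        rw [herase]
        have hkey := hpref (n-1) (by omega) (by omega)
        have hcast : ((n-1 : ℕ) : ℝ) = (n : ℝ) - 1 := by
          push_cast [Nat.cast_sub hc]; ring
        rw [hcast] at hkey
        have hnpos : (0:ℝ) < (n:ℝ) := by exact_mod_cast hc
        have : ((n:ℝ) - 1) / n * f X = f X - f X / n := by
          field_simp
        linarith [this ▸ hkey]
end

section
/- Let ρ > 1 and suppose the real sequence (aₙ) satisfies the linear recurrence aₙ₊₁ = (1/ρ + ρ - 1)·aₙ - aₙ₋₁ for all n ≥ 1, with a₀ > 0 and (a₀, a₁) ≠ (0,0). If 1 < ρ < φ+1 (φ the golden ratio), then there exists ℓ ∈ ℕ with a_ℓ < 0. -/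
/-!
With `c = 1/ρ + ρ - 1` the hypothesis `1 < ρ < φ + 1` says exactly `c < 2`, and the recurrence
reads `Δ²aₙ = (c - 2) aₙ₊₁`. If the sequence stayed nonnegative it would be concave; a nonnegative
concave sequence on `ℕ` is nondecreasing, so `aₙ ≥ a₀ > 0` and the differences would decrease by at
least `(2 - c) a₀` at every step, eventually becoming negative.
-/

section Archimedean

variable {α : Type*} [AddCommGroup α] [LinearOrder α] [IsOrderedAddMonoid α] [Archimedean α]

theorem exists_lt_zero_of_succ_le_sub {b : ℕ → α} {ε : α} (hε : 0 < ε)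
    (h : ∀ n, b (n + 1) ≤ b n - ε) : ∃ n, b n < 0 := by
  have hle : ∀ n, b n ≤ b 0 - n • ε := by
    intro n
    induction n with
    | zero => simp
    | succ n ih => rw [succ_nsmul, ← sub_sub]; exact (h n).trans (sub_le_sub_right ih ε)
  obtain ⟨n, hn⟩ := Archimedean.arch (b 0) hε
  refine ⟨n + 1, (hle (n + 1)).trans_lt ?_⟩
  rw [succ_nsmul, sub_neg]
  exact hn.trans_lt (lt_add_of_pos_right _ hε)

theorem monotone_of_nonneg_of_antitone_sub {a : ℕ → α} (h0 : ∀ n, 0 ≤ a n)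
    (hconc : Antitone fun n => a (n + 1) - a n) : Monotone a := by
  refine monotone_nat_of_le_succ fun k => ?_
  by_contra! hdec
  obtain ⟨m, hm⟩ := exists_lt_zero_of_succ_le_sub (b := fun m => a (k + m)) (sub_pos.2 hdec)
    fun m => by have := hconc (Nat.le_add_right k m); rw [← add_assoc]; grind
  exact (h0 (k + m)).not_gt hm

end Archimedean

theorem exists_lt_zero_of_linear_recurrence {K : Type*} [Field K] [LinearOrder K]
    [IsStrictOrderedRing K] [Archimedean K] {c : K} (hc : c < 2) {a : ℕ → K}
    (hrec : ∀ n, a (n + 2) = c * a (n + 1) - a n) (ha0 : 0 < a 0) : ∃ n, a n < 0 := by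
  by_contra! hnonneg
  have hsecond : ∀ n, a (n + 2) - a (n + 1) - (a (n + 1) - a n) = (c - 2) * a (n + 1) :=
    fun n => by rw [hrec n]; ring
  have hmono : Monotone a := monotone_of_nonneg_of_antitone_sub hnonneg <|
    antitone_nat_of_succ_le fun n => by
      have := mul_nonpos_of_nonpos_of_nonneg (sub_nonpos.2 hc.le) (hnonneg (n + 1))
      linarith [hsecond n]
  obtain ⟨n, hn⟩ := exists_lt_zero_of_succ_le_sub (b := fun n => a (n + 1) - a n)
    (mul_pos (sub_pos.2 hc) ha0) fun n => by
      have := mul_le_mul_of_nonpos_left (hmono (Nat.zero_le (n + 1))) (sub_nonpos.2 hc.le)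
      linarith [hsecond n]
  exact (sub_nonneg.2 (hmono n.le_succ)).not_gt hn

theorem one_div_add_sub_one_lt_two {ρ : ℝ} (h1 : 1 < ρ) (h2 : ρ < (1 + Real.sqrt 5) / 2 + 1) :
    1 / ρ + ρ - 1 < 2 := by
  have hsq : Real.sqrt 5 ^ 2 = 5 := Real.sq_sqrt (by norm_num)
  have hsqrt : 2 < Real.sqrt 5 := by nlinarith [Real.sqrt_nonneg 5]
  -- `ρ² - 3ρ + 1 = (ρ - (3 + √5)/2)(ρ - (3 - √5)/2)` is negative between its roots
  have hquad : ρ ^ 2 + 1 < 3 * ρ := by nlinarith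
  rw [div_add' _ _ _ (by positivity), div_sub' (by positivity), div_lt_iff₀ (by positivity)]
  nlinarith

theorem recurrence_becomes_negative_general (ρ : ℝ) (h1 : 1 < ρ)
    (h2 : ρ < (1 + Real.sqrt 5) / 2 + 1) (a : ℕ → ℝ)
    (hrec : ∀ n : ℕ, a (n + 2) = (1 / ρ + ρ - 1) * a (n + 1) - a n)
    (ha0 : 0 < a 0) :
    ∃ ℓ : ℕ, a ℓ < 0 :=
  exists_lt_zero_of_linear_recurrence (one_div_add_sub_one_lt_two h1 h2) hrec ha0

/-- A nonzero solution of the recurrence aₙ₊₁ = (1/ρ + ρ - 1)aₙ - aₙ₋₁ with a₀ > 0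
eventually becomes negative when 1 < ρ < φ + 1. -/
theorem recurrence_becomes_negative (ρ : ℝ) (h1 : 1 < ρ)
    (h2 : ρ < (1 + Real.sqrt 5) / 2 + 1) (a : ℕ → ℝ)
    (hrec : ∀ n : ℕ, a (n + 2) = (1 / ρ + ρ - 1) * a (n + 1) - a n)
    (ha0 : 0 < a 0) (hne : (a 0, a 1) ≠ (0, 0)) :
    ∃ ℓ : ℕ, a ℓ < 0 :=
  recurrence_becomes_negative_general ρ h1 h2 a hrec ha0
end

section
/- Let x = r·exp(iθ) ∈ ℂ with r > 0 and θ ∈ (0, π], and let λ ∈ ℂ with Re(λ) > 0. Then there exists n ∈ ℕ with Re(λ·xⁿ) < 0. -/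
open Real Complex

lemma re_real_mul_exp (c a : ℝ) :
    ((c : ℂ) * Complex.exp ((a : ℂ) * Complex.I)).re = c * Real.cos a := by
  simp [Complex.exp_mul_I, Complex.mul_re, Complex.cos_ofReal_re]

/-- Repeated multiplication by a complex number with argument θ ∈ (0, π] eventually
rotates any point with positive real part into the left half-plane. -/
theorem rotation_reaches_negative_real_part (r θ : ℝ) (hr : 0 < r)
    (hθ1 : 0 < θ) (hθ2 : θ ≤ Real.pi) (x : ℂ)
    (hx : x = (r : ℂ) * Complex.exp ((θ : ℂ) * Complex.I))
    (lam : ℂ) (hlam : 0 < lam.re) :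
    ∃ n : ℕ, (lam * x ^ n).re < 0 := by
  set φ := Complex.arg lam with hφdef
  have hlam0 : lam ≠ 0 := fun h => by simp [h] at hlam
  have hρ : 0 < ‖lam‖ := norm_pos_iff.mpr hlam0
  have hφ : |φ| < π / 2 := by
    rw [hφdef, Complex.abs_arg_lt_pi_div_two_iff]
    exact Or.inl hlam
  have hφ1 : -(π/2) < φ := (abs_lt.mp hφ).1
  have hφ2 : φ < π/2 := (abs_lt.mp hφ).2
  have hP : ∃ n : ℕ, π/2 < φ + n*θ := by
    obtain ⟨n, hn⟩ := exists_nat_gt ((π/2 - φ)/θ)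
    exact ⟨n, by nlinarith [(div_lt_iff₀ hθ1).mp hn]⟩
  classical
  set n := Nat.find hP with hndef
  have hn : π/2 < φ + n*θ := Nat.find_spec hP
  have hn0 : n ≠ 0 := by
    intro h
    rw [h] at hn; simp at hn; linarith
  obtain ⟨m, hm⟩ := Nat.exists_eq_succ_of_ne_zero hn0
  have hmin : ¬ π/2 < φ + (m:ℝ)*θ := by
    have := Nat.find_min hP (m := m) (by omega)
    exact this
  push_neg at hmin
  have hkey : φ + n*θ < π + π/2 := by
    have hsplit : (n : ℝ) = (m:ℝ) + 1 := by rw [hm]; push_cast; ring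
    rcases lt_or_eq_of_le hθ2 with h | h
    · nlinarith
    · rcases Nat.eq_zero_or_pos m with h1 | h1
      · rw [hsplit, h1]; push_cast; linarith
      · exfalso
        have : (1:ℝ) ≤ (m:ℝ) := by exact_mod_cast h1
        nlinarith
  have hcos : Real.cos (φ + n*θ) < 0 :=
    Real.cos_neg_of_pi_div_two_lt_of_lt hn hkey
  refine ⟨n, ?_⟩
  have hlameq : lam = (‖lam‖ : ℂ) * Complex.exp ((φ : ℂ) * Complex.I) :=
    (Complex.norm_mul_exp_arg_mul_I lam).symm
  have : lam * x ^ n = ((‖lam‖ * r^n : ℝ) : ℂ) *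
      Complex.exp (((φ + n*θ : ℝ) : ℂ) * Complex.I) := by
    rw [hx, mul_pow, ← Complex.exp_nat_mul]
    conv_lhs => rw [hlameq]
    push_cast
    rw [show ((φ:ℂ) + (n:ℂ)*(θ:ℂ))*Complex.I = (φ:ℂ)*Complex.I + (n:ℂ)*((θ:ℂ)*Complex.I) by ring,
      Complex.exp_add]
    ring
  rw [this, re_real_mul_exp]
  exact mul_neg_of_pos_of_neg (by positivity) hcos
end

section
/- Let ρ* be the unique real root ρ ≥ 1 of the polynomial P(ρ) = -4ρ⁶ + 24ρ⁴ - ρ³ - 30ρ² + 31ρ - 4. Then 2.246 < ρ* < 2.247. -/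
private lemma Ppos : ∀ ρ : ℝ, 1 ≤ ρ → ρ ≤ 2.246 →
    0 < -4 * ρ ^ 6 + 24 * ρ ^ 4 - ρ ^ 3 - 30 * ρ ^ 2 + 31 * ρ - 4 := by
  intro ρ h1 h2
  nlinarith [sq_nonneg (ρ - 1), sq_nonneg (ρ - 2.246), sq_nonneg ρ, sq_nonneg (ρ^2 - 2),
    mul_nonneg (sub_nonneg.2 h1) (sub_nonneg.2 h2), sq_nonneg (ρ^2 - 5),
    mul_nonneg (mul_nonneg (sub_nonneg.2 h1) (sub_nonneg.2 h2)) (sq_nonneg ρ),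
    mul_nonneg (mul_nonneg (sub_nonneg.2 h1) (sub_nonneg.2 h2)) (sq_nonneg (ρ-1)),
    mul_nonneg (mul_nonneg (sub_nonneg.2 h1) (sub_nonneg.2 h2)) (sq_nonneg (ρ-2)),
    mul_nonneg (mul_nonneg (sub_nonneg.2 h1) (sub_nonneg.2 h2)) (sq_nonneg (ρ^2-4))]

private lemma Panti : ∀ a b : ℝ, 2 ≤ a → a < b →
    -4 * b ^ 6 + 24 * b ^ 4 - b ^ 3 - 30 * b ^ 2 + 31 * b - 4 <
    -4 * a ^ 6 + 24 * a ^ 4 - a ^ 3 - 30 * a ^ 2 + 31 * a - 4 := by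
  intro a b ha hab
  have hb : (2:ℝ) ≤ b := le_of_lt (lt_of_le_of_lt ha hab)
  have h1 : 0 ≤ a^2 - 4 := by nlinarith
  have h2 : 0 ≤ b^2 - 4 := by nlinarith
  have hd : 0 < b - a := by linarith
  nlinarith [mul_nonneg (mul_nonneg h1 (le_of_lt hd)) (pow_nonneg (by linarith : (0:ℝ) ≤ a) 3),
    mul_nonneg (mul_nonneg h2 (le_of_lt hd)) (pow_nonneg (by linarith : (0:ℝ) ≤ b) 3),
    mul_nonneg (mul_nonneg h1 (le_of_lt hd)) (mul_nonneg (mul_nonneg (by linarith : (0:ℝ) ≤ a) (by linarith : (0:ℝ) ≤ a)) (by linarith : (0:ℝ) ≤ b)),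
    mul_nonneg (mul_nonneg h2 (le_of_lt hd)) (mul_nonneg (mul_nonneg (by linarith : (0:ℝ) ≤ b) (by linarith : (0:ℝ) ≤ b)) (by linarith : (0:ℝ) ≤ a)),
    mul_pos (mul_pos hd hd) (by linarith : (0:ℝ) < a + b),
    mul_pos hd (by nlinarith : (0:ℝ) < a^2 + a*b + b^2 + 30*(a+b) - 31)]

/-- The polynomial -4ρ⁶ + 24ρ⁴ - ρ³ - 30ρ² + 31ρ - 4 has a unique root ρ* ≥ 1,
and 2.246 < ρ* < 2.247. -/
theorem rho_star_bounds :
    let P : ℝ → ℝ := fun ρ => -4 * ρ ^ 6 + 24 * ρ ^ 4 - ρ ^ 3 - 30 * ρ ^ 2 + 31 * ρ - 4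
    (∃! ρ : ℝ, 1 ≤ ρ ∧ P ρ = 0) ∧
      ∀ ρ : ℝ, 1 ≤ ρ → P ρ = 0 → 2.246 < ρ ∧ ρ < 2.247 := by
  intro P
  have hP2247 : P 2.247 < 0 := by norm_num [P]
  have hbound : ∀ ρ : ℝ, 1 ≤ ρ → P ρ = 0 → 2.246 < ρ ∧ ρ < 2.247 := by
    intro ρ h1 h0
    constructor
    · by_contra h
      push_neg at h
      have := Ppos ρ h1 h
      simp only [P] at h0
      linarith
    · by_contra h
      push_neg at h
      rcases eq_or_lt_of_le h with rfl | hlt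
      · linarith [hP2247, h0.symm.le]
      · have := Panti 2.247 ρ (by norm_num) hlt
        simp only [P] at h0 this
        simp only [P] at hP2247
        linarith
  refine ⟨?_, hbound⟩
  have hcont : ContinuousOn P (Set.Icc (2.246:ℝ) 2.247) := by
    apply Continuous.continuousOn; continuity
  have hiv := intermediate_value_Icc' (by norm_num : (2.246:ℝ) ≤ 2.247) hcont
  have h0mem : (0:ℝ) ∈ Set.Icc (P 2.247) (P 2.246) := by
    constructor
    · exact hP2247.le
    · exact (Ppos 2.246 (by norm_num) le_rfl).le
  obtain ⟨ρ, hρmem, hρ0⟩ := hiv h0mem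
  refine ⟨ρ, ⟨by linarith [hρmem.1], hρ0⟩, ?_⟩
  rintro y ⟨hy1, hy0⟩
  have hyb := hbound y hy1 hy0
  have hρ1 : (1:ℝ) ≤ ρ := by linarith [hρmem.1]
  have hρb := hbound ρ hρ1 hρ0
  by_contra hne
  rcases lt_or_gt_of_ne hne with hlt | hlt
  · have := Panti y ρ (by linarith [hyb.1] : (2:ℝ) ≤ y) hlt
    simp only [P] at hρ0 hy0; linarith
  · have := Panti ρ y (by linarith [hρb.1] : (2:ℝ) ≤ ρ) hlt
    simp only [P] at hρ0 hy0; linarith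
end

section
/- Let ρ > 1 and consider an instance of continuous incremental maximization with strictly increasing continuous value function v with v(0)=0 and lim_{c→∞} v(c) = ∞, non-increasing density d(c) = v(c)/c for c > 0 with d(0) = 1. Define p(c) = max{c' ≥ 0 : v(c') ≤ ρ·v(c)}. If a solution (c₁, c₂, …) of positive sizes satisfies d(c₁) ≥ 1/ρ and, for all i, p(cᵢ) > Σ_{j=1}^{i} cⱼ and d(cᵢ₊₁) ≥ v(cᵢ)/(p(cᵢ) - Σ_{j=1}^{i} cⱼ), then for every size C ≥ 0 the solution value f(X(C)) = max{max_{i<n} v(cᵢ), (C - Σ_{i<n} cᵢ)·d(cₙ)} (with n such that Σ_{i<n} cᵢ < C ≤ Σ_{i≤n} cᵢ) satisfies ρ·f(X(C)) ≥ v(C). -/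
/-- One direction of the competitiveness characterization: if a solution satisfies
the density conditions, then it is ρ-competitive for every size C. -/
theorem competitive_of_density_conditions (ρ : ℝ) (hρ : 1 < ρ)
    (v d p : ℝ → ℝ)
    (hvcont : ContinuousOn v (Set.Ici 0))
    (hvmono : StrictMonoOn v (Set.Ici 0))
    (hv0 : v 0 = 0)
    (hvtop : Filter.Tendsto v Filter.atTop Filter.atTop)
    (hd0 : d 0 = 1)
    (hvd : ∀ c : ℝ, 0 < c → d c = v c / c)
    (hdanti : AntitoneOn d (Set.Ici 0))
    (hp : ∀ c : ℝ, 0 ≤ c → IsGreatest {c' : ℝ | 0 ≤ c' ∧ v c' ≤ ρ * v c} (p c))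
    (c : ℕ → ℝ) (hc : ∀ i, 0 < c i)
    (h1 : 1 / ρ ≤ d (c 0))
    (h2 : ∀ i : ℕ, (∑ j ∈ Finset.range (i + 1), c j) < p (c i))
    (h3 : ∀ i : ℕ,
        v (c i) / (p (c i) - ∑ j ∈ Finset.range (i + 1), c j) ≤ d (c (i + 1))) :
    ∀ C : ℝ, 0 ≤ C → ∀ n : ℕ,
      (∑ j ∈ Finset.range n, c j) < C → C ≤ ∑ j ∈ Finset.range (n + 1), c j →
      v C ≤ ρ * max (⨆ i : Fin n, v (c i))
        ((C - ∑ j ∈ Finset.range n, c j) * d (c n)) := by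
  have hρ0 : (0:ℝ) < ρ := by linarith
  have hvnn : ∀ x : ℝ, 0 ≤ x → 0 ≤ v x := by
    intro x hx
    have := hvmono.monotoneOn (Set.self_mem_Ici) (Set.mem_Ici.2 hx) hx
    linarith [hv0 ▸ this]
  have hdnn : ∀ x : ℝ, 0 ≤ x → 0 ≤ d x := by
    intro x hx
    rcases eq_or_lt_of_le hx with h | h
    · rw [← h, hd0]; norm_num
    · rw [hvd x h]; exact div_nonneg (hvnn x hx) h.le
  have hvle : ∀ x : ℝ, 0 ≤ x → v x ≤ x := by
    intro x hx
    rcases eq_or_lt_of_le hx with h | h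
    · rw [← h, hv0]
    · have hdx : d x ≤ 1 := by
        have := hdanti (Set.self_mem_Ici) (Set.mem_Ici.2 hx) hx
        rwa [hd0] at this
      have := hvd x h
      rw [eq_div_iff h.ne'] at this
      nlinarith
  intro C hC n hlt hle
  cases n with
  | zero =>
      simp only [Finset.range_zero, Finset.sum_empty, sub_zero] at *
      have h1' : 1 ≤ ρ * d (c 0) := by
        rw [div_le_iff₀ hρ0] at h1; linarith
      have hCpos : 0 < C := hlt
      calc v C ≤ C := hvle C hC
        _ ≤ ρ * (C * d (c 0)) := by nlinarith
        _ ≤ ρ * max (⨆ i : Fin 0, v (c i)) (C * d (c 0)) :=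
            mul_le_mul_of_nonneg_left (le_max_right _ _) hρ0.le
  | succ m =>
      set S : ℝ := ∑ j ∈ Finset.range (m + 1), c j with hSdef
      have hS0 : 0 ≤ S := Finset.sum_nonneg fun j _ => (hc j).le
      obtain ⟨⟨hp0, hvp⟩, hpmax⟩ := hp (c m) (hc m).le
      have hSp : S < p (c m) := h2 m
      have h3' : v (c m) / (p (c m) - S) ≤ d (c (m + 1)) := h3 m
      have hps : 0 < p (c m) - S := by linarith
      rcases le_or_gt C (p (c m)) with hCp | hCp
      · -- C ≤ p (c m) : use v C ≤ ρ v (c m) ≤ ρ sup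
        have hvCp : v C ≤ v (p (c m)) :=
          hvmono.monotoneOn (Set.mem_Ici.2 hC) (Set.mem_Ici.2 hp0) hCp
        have hsup : v (c m) ≤ ⨆ i : Fin (m + 1), v (c i) :=
          le_ciSup (f := fun i : Fin (m + 1) => v (c i.1))
            (Set.Finite.bddAbove (Set.finite_range _))
            (⟨m, Nat.lt_succ_self m⟩ : Fin (m + 1))
        calc v C ≤ ρ * v (c m) := le_trans hvCp hvp
          _ ≤ ρ * ⨆ i : Fin (m + 1), v (c i) :=
              mul_le_mul_of_nonneg_left hsup hρ0.le
          _ ≤ _ := mul_le_mul_of_nonneg_left (le_max_left _ _) hρ0.le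
      · -- p (c m) < C
        have hCpos : 0 < C := lt_trans (lt_of_le_of_lt hS0 hSp) hCp
        have hppos : 0 < p (c m) := lt_of_le_of_lt hS0 hSp
        have hvdC : v C = C * d C := by
          rw [hvd C hCpos]; field_simp
        have hvdp : v (p (c m)) = p (c m) * d (p (c m)) := by
          rw [hvd _ hppos]; field_simp
        have key1 : d C ≤ d (p (c m)) :=
          hdanti (Set.mem_Ici.2 hp0) (Set.mem_Ici.2 hC) hCp.le
        have hdp0 : 0 ≤ d (p (c m)) := hdnn _ hp0
        have h3'' : v (c m) ≤ d (c (m + 1)) * (p (c m) - S) := by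
          rw [div_le_iff₀ hps] at h3'; linarith
        have hCS : 0 < C - S := by linarith
        have key : v C * (p (c m) - S) ≤ ρ * ((C - S) * d (c (m + 1))) * (p (c m) - S) := by
          nlinarith [mul_le_mul_of_nonneg_right key1 (mul_nonneg hCpos.le hps.le),
            mul_nonneg (mul_nonneg hdp0 hS0) (sub_nonneg.2 hCp.le),
            mul_le_mul_of_nonneg_right h3'' hCS.le,
            mul_le_mul_of_nonneg_right hvp hCS.le]
        have key' : v C ≤ ρ * ((C - S) * d (c (m + 1))) :=
          le_of_mul_le_mul_right key hps
        exact le_trans key' (mul_le_mul_of_nonneg_left (le_max_right _ _) hρ0.le)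
end

section
/- In the separable incremental maximization instance with N = 10 sets R₁,…,R₁₀ where |Rᵢ| = i, densities d = (1, 1/2, 1/2, 1/2, 2/5, 1/3, 1/3, 1/3, 1/3, 1/3), objective f(X) = max_i |X ∩ Rᵢ|·dᵢ, and probability distribution p on sizes with p₁ = 0.132, p₄ = 0.395, p₁₀ = 0.473 (all other pᵢ = 0), every deterministic incremental algorithm Alg (determined by a sequence 1 ≤ c₁ < … < c_k ≤ 10 with Σcⱼ ≤ 10, adding sets R_{c₁}, R_{c₂}, … in order) satisfies Σᵢ pᵢ · (i·dᵢ)/Alg(i) ≥ 1.447, where Alg(i) = max_{1≤j≤k} min{i - Σ_{j'<j} c_{j'}, c_j}·d_{c_j} is the value of the first i elements added. -/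
set_option maxHeartbeats 2000000

lemma sup'_range1 (f : ℕ → ℝ) (h : (Finset.range 1).Nonempty) :
    (Finset.range 1).sup' h f = f 0 := by
  simp [Finset.range_one]

lemma sup'_range2 (f : ℕ → ℝ) (h : (Finset.range 2).Nonempty) :
    (Finset.range 2).sup' h f = max (f 0) (f 1) := by
  apply le_antisymm
  · refine Finset.sup'_le _ _ fun j hj => ?_
    simp only [Finset.mem_range] at hj
    interval_cases j
    exacts [le_max_left _ _, le_max_right _ _]
  · exact max_le (Finset.le_sup' f (by simp)) (Finset.le_sup' f (by simp))


lemma sup'_range3 (f : ℕ → ℝ) (h : (Finset.range 3).Nonempty) :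
    (Finset.range 3).sup' h f = max (max (f 0) (f 1)) (f 2) := by
  apply le_antisymm
  · refine Finset.sup'_le _ _ fun j hj => ?_
    simp only [Finset.mem_range] at hj
    interval_cases j
    exacts [le_max_of_le_left (le_max_left _ _), le_max_of_le_left (le_max_right _ _),
      le_max_right _ _]
  · exact max_le (max_le (Finset.le_sup' f (by simp)) (Finset.le_sup' f (by simp)))
      (Finset.le_sup' f (by simp))

lemma sup'_range4 (f : ℕ → ℝ) (h : (Finset.range 4).Nonempty) :
    (Finset.range 4).sup' h f = max (max (max (f 0) (f 1)) (f 2)) (f 3) := by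
  apply le_antisymm
  · refine Finset.sup'_le _ _ fun j hj => ?_
    simp only [Finset.mem_range] at hj
    interval_cases j
    exacts [le_max_of_le_left (le_max_of_le_left (le_max_left _ _)),
      le_max_of_le_left (le_max_of_le_left (le_max_right _ _)),
      le_max_of_le_left (le_max_right _ _), le_max_right _ _]
  · exact max_le (max_le (max_le (Finset.le_sup' f (by simp)) (Finset.le_sup' f (by simp)))
      (Finset.le_sup' f (by simp))) (Finset.le_sup' f (by simp))

lemma sum_Icc10 (f : ℕ → ℝ) : ∑ i ∈ Finset.Icc 1 10, f i
    = f 1 + f 2 + f 3 + f 4 + f 5 + f 6 + f 7 + f 8 + f 9 + f 10 := by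
  rw [show Finset.Icc 1 10 = ({1,2,3,4,5,6,7,8,9,10} : Finset ℕ) from by decide]
  simp [Finset.sum_insert, Finset.mem_insert]
  ring

/-- Yao-principle lower bound of 1.447 on the randomized competitive ratio:
for the 10-set separable instance with the given densities and probability
distribution, every deterministic incremental algorithm has expected ratio ≥ 1.447. -/
theorem yao_lower_bound (k : ℕ) (hk : 1 ≤ k) (c : ℕ → ℕ)
    (hmono : ∀ j : ℕ, j + 1 < k → c j < c (j + 1))
    (hlb : ∀ j < k, 1 ≤ c j) (hub : ∀ j < k, c j ≤ 10)
    (hsum : ∑ j ∈ Finset.range k, c j ≤ 10) :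
    let d : ℕ → ℝ := fun i =>
      if i = 1 then 1 else if i ≤ 4 then 1 / 2 else if i = 5 then 2 / 5 else 1 / 3
    let prob : ℕ → ℝ := fun i =>
      if i = 1 then 0.132 else if i = 4 then 0.395 else if i = 10 then 0.473 else 0
    let alg : ℕ → ℝ := fun i =>
      (Finset.range k).sup' (Finset.nonempty_range_iff.mpr (by omega))
        (fun j => min ((i : ℝ) - ∑ j' ∈ Finset.range j, (c j' : ℝ)) (c j : ℝ) * d (c j))
    ∑ i ∈ Finset.Icc 1 10, prob i * ((i : ℝ) * d i) / alg i ≥ 1.447 := by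
  intro d prob alg
  have hcj : ∀ j < k, j + 1 ≤ c j := by
    intro j
    induction j with
    | zero => exact fun h => hlb 0 h
    | succ n ih =>
      intro h
      have h1 := ih (by omega)
      have h2 := hmono n (by omega)
      omega
  have hk4 : k ≤ 4 := by
    by_contra hgt
    push_neg at hgt
    have h15 : 15 ≤ ∑ j ∈ Finset.range k, c j := by
      calc (15 : ℕ) = ∑ j ∈ Finset.range 5, (j + 1) := by decide
      _ ≤ ∑ j ∈ Finset.range 5, c j := Finset.sum_le_sum fun j hj => hcj j (by simp at hj; omega)
      _ ≤ ∑ j ∈ Finset.range k, c j := Finset.sum_le_sum_of_subset (by simp [Finset.range_subset]; omega)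
    omega
  rw [sum_Icc10]
  interval_cases k
  · -- k = 1
    have h0l := hlb 0 (by omega)
    have h0u := hub 0 (by omega)
    have halg : ∀ i : ℕ, alg i = min ((i:ℝ) - 0) (c 0) * d (c 0) := by
      intro i
      show (Finset.range 1).sup' _ _ = _
      rw [sup'_range1]
      simp
    simp only [halg]
    unfold d prob
    norm_num
    interval_cases h : c 0 <;> norm_num [min_def]
  · -- k = 2
    have hm : c 0 < c 1 := by simpa using hmono 0 (by omega)
    have h0l := hlb 0 (by omega)
    have h1u := hub 1 (by omega)
    have hs2 : c 0 + c 1 ≤ 10 := by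
      simpa [show (2:ℕ) = 1 + 1 from rfl, Finset.sum_range_succ] using hsum
    clear hsum
    have halg : ∀ i : ℕ, alg i
        = max (min ((i:ℝ) - 0) (c 0) * d (c 0)) (min ((i:ℝ) - c 0) (c 1) * d (c 1)) := by
      intro i
      show (Finset.range 2).sup' _ _ = _
      rw [sup'_range2]
      norm_num
    simp only [halg]
    unfold d prob
    norm_num
    have h0u4 : c 0 ≤ 4 := by omega
    interval_cases h0 : c 0 <;>
      first
        | (interval_cases h1 : c 1 <;> norm_num [min_def, max_def])
        | omega
  · -- k = 3
    have hm01 : c 0 < c 1 := by simpa using hmono 0 (by omega)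
    have hm12 : c 1 < c 2 := by simpa using hmono 1 (by omega)
    have h0l := hlb 0 (by omega)
    have h2u := hub 2 (by omega)
    have hs3 : c 0 + c 1 + c 2 ≤ 10 := by
      simpa [show (3:ℕ) = 2 + 1 from rfl, Finset.sum_range_succ] using hsum
    clear hsum
    have halg : ∀ i : ℕ, alg i
        = max (max (min ((i:ℝ) - 0) (c 0) * d (c 0)) (min ((i:ℝ) - c 0) (c 1) * d (c 1)))
            (min ((i:ℝ) - (c 0 + c 1)) (c 2) * d (c 2)) := by
      intro i
      show (Finset.range 3).sup' _ _ = _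
      rw [sup'_range3]
      norm_num [Finset.sum_range_succ]
    simp only [halg]
    unfold d prob
    norm_num
    have hb0 : c 0 ≤ 2 := by omega
    have hb1 : c 1 ≤ 4 := by omega
    interval_cases h0 : c 0 <;>
      interval_cases h1 : c 1 <;>
      first
        | (interval_cases h2 : c 2 <;> norm_num [min_def, max_def])
        | omega
  · -- k = 4
    have hm01 : c 0 < c 1 := by simpa using hmono 0 (by omega)
    have hm12 : c 1 < c 2 := by simpa using hmono 1 (by omega)
    have hm23 : c 2 < c 3 := by simpa using hmono 2 (by omega)
    have h0l := hlb 0 (by omega)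
    have h3u := hub 3 (by omega)
    have hs4 : c 0 + c 1 + c 2 + c 3 ≤ 10 := by
      simpa [show (4:ℕ) = 3 + 1 from rfl, show (3:ℕ) = 2 + 1 from rfl,
        Finset.sum_range_succ] using hsum
    clear hsum
    have halg : ∀ i : ℕ, alg i
        = max (max (max (min ((i:ℝ) - 0) (c 0) * d (c 0)) (min ((i:ℝ) - c 0) (c 1) * d (c 1)))
            (min ((i:ℝ) - (c 0 + c 1)) (c 2) * d (c 2)))
            (min ((i:ℝ) - (c 0 + c 1 + c 2)) (c 3) * d (c 3)) := by
      intro i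
      show (Finset.range 4).sup' _ _ = _
      rw [sup'_range4]
      norm_num [Finset.sum_range_succ]
    simp only [halg]
    unfold d prob
    have e0 : c 0 = 1 := by omega
    have e1 : c 1 = 2 := by omega
    have e2 : c 2 = 3 := by omega
    have e3 : c 3 = 4 := by omega
    rw [e0, e1, e2, e3]
    norm_num [min_def, max_def]
end

section
/- Let r > 1, and let i, k ∈ ℕ, δ, ε ∈ ℝ with ε ≥ 0. Set A = r^(k+δ)·(1 - r^{-(i+1)})/(r-1). Then r^(i+1+ε)·(r^(i+ε) - 1) ≥ r^(k+δ)·(r^(k+δ) - r^ε·(r^(i+1)-1)/(r-1)) holds if and only if r^ε ≥ (-(A - 1) + √((A-1)² + 4r^(2k+2δ-1)))/(2r^i) , i.e., if and only if ε ≥ log_r(√((A-1)² + 4r^(2k+2δ-1)) - A + 1) - log_r 2 - i. -/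
lemma quad_iff (a b c x : ℝ) (ha : 0 < a) (hc : c < 0) (hx : 0 < x) :
    0 ≤ a * x ^ 2 + b * x + c ↔ (-b + Real.sqrt (b ^ 2 - 4 * a * c)) / (2 * a) ≤ x := by
  set s := Real.sqrt (b ^ 2 - 4 * a * c) with hs_def
  have hd : 0 ≤ b ^ 2 - 4 * a * c := by nlinarith
  have hs2 : s ^ 2 = b ^ 2 - 4 * a * c := Real.sq_sqrt hd
  have hs : |b| < s := by
    rw [← Real.sqrt_sq_eq_abs]
    exact Real.sqrt_lt_sqrt (sq_nonneg b) (by nlinarith)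
  have habs : -|b| ≤ b := neg_abs_le b
  have hbs : 0 < 2 * a * x + b + s := by nlinarith [mul_pos ha hx]
  have key : 4 * a * (a * x ^ 2 + b * x + c) = (2 * a * x + b - s) * (2 * a * x + b + s) := by
    linear_combination hs2
  constructor
  · intro h
    have h4 : 0 ≤ (2 * a * x + b - s) * (2 * a * x + b + s) := by nlinarith
    have h5 : 0 ≤ 2 * a * x + b - s := by
      by_contra h5
      push_neg at h5
      nlinarith
    rw [div_le_iff₀ (by linarith)]
    linarith
  · intro h
    rw [div_le_iff₀ (by linarith)] at h
    nlinarith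

/-- Solving the quadratic inequality determining the threshold ν(i) in the
analysis of the randomized scaling algorithm. -/
theorem nu_threshold (r : ℝ) (hr : 1 < r) (i k : ℕ) (δ ε : ℝ) (hε : 0 ≤ ε) :
    let A : ℝ := r ^ ((k : ℝ) + δ) * (1 - r ^ (-((i : ℝ) + 1))) / (r - 1)
    (r ^ ((i : ℝ) + 1 + ε) * (r ^ ((i : ℝ) + ε) - 1) ≥
        r ^ ((k : ℝ) + δ) *
          (r ^ ((k : ℝ) + δ) - r ^ ε * (r ^ ((i : ℝ) + 1) - 1) / (r - 1)) ↔
      (-(A - 1) + Real.sqrt ((A - 1) ^ 2 + 4 * r ^ (2 * (k : ℝ) + 2 * δ - 1))) /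
          (2 * r ^ (i : ℝ)) ≤ r ^ ε) ∧
    (r ^ ((i : ℝ) + 1 + ε) * (r ^ ((i : ℝ) + ε) - 1) ≥
        r ^ ((k : ℝ) + δ) *
          (r ^ ((k : ℝ) + δ) - r ^ ε * (r ^ ((i : ℝ) + 1) - 1) / (r - 1)) ↔
      Real.logb r (Real.sqrt ((A - 1) ^ 2 + 4 * r ^ (2 * (k : ℝ) + 2 * δ - 1)) - A + 1) -
        Real.logb r 2 - i ≤ ε) := by
  intro A
  have hr0 : (0:ℝ) < r := lt_trans one_pos hr
  have hr1 : (0:ℝ) < r - 1 := by linarith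
  have hA0 : A = r ^ ((k : ℝ) + δ) * (1 - r ^ (-((i : ℝ) + 1))) / (r - 1) := rfl
  clear_value A
  set P := r ^ ((k : ℝ) + δ) with hP_def
  set Q := r ^ (i : ℝ) with hQ_def
  set X := r ^ ε with hX_def
  have hP : 0 < P := Real.rpow_pos_of_pos hr0 _
  have hQ : 0 < Q := Real.rpow_pos_of_pos hr0 _
  have hX : 0 < X := Real.rpow_pos_of_pos hr0 _
  have e1 : r ^ ((i : ℝ) + 1 + ε) = Q * r * X := by
    rw [hQ_def, hX_def, Real.rpow_add hr0, Real.rpow_add hr0, Real.rpow_one]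
  have e2 : r ^ ((i : ℝ) + ε) = Q * X := by
    rw [hQ_def, hX_def, Real.rpow_add hr0]
  have e3 : r ^ ((i : ℝ) + 1) = Q * r := by
    rw [hQ_def, Real.rpow_add hr0, Real.rpow_one]
  have e5 : r ^ (2 * (k : ℝ) + 2 * δ - 1) = P ^ 2 / r := by
    rw [hP_def, show 2 * (k : ℝ) + 2 * δ - 1 = ((k : ℝ) + δ) * ((2:ℕ):ℝ) - 1 by push_cast; ring,
      Real.rpow_sub hr0, Real.rpow_one, Real.rpow_mul hr0.le, Real.rpow_natCast]
  have hA : A = P * (1 - 1 / (Q * r)) / (r - 1) := by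
    rw [hA0, Real.rpow_neg hr0.le, e3, one_div]
  rw [e1, e2, e3, e5]
  -- the quadratic form
  have key := quad_iff (Q ^ 2 * r) (Q * r * (A - 1)) (-(P ^ 2)) X (by positivity)
    (by nlinarith) hX
  have hexpand : Q * r * X * (Q * X - 1) - P * (P - X * (Q * r - 1) / (r - 1)) =
      Q ^ 2 * r * X ^ 2 + Q * r * (A - 1) * X + -(P ^ 2) := by
    rw [hA]
    field_simp
    ring
  -- discriminant
  set D : ℝ := (A - 1) ^ 2 + 4 * (P ^ 2 / r) with hD_def
  have hD0 : 0 ≤ D := by positivity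
  have hS2 : Real.sqrt D ^ 2 = D := Real.sq_sqrt hD0
  have hS0 : 0 ≤ Real.sqrt D := Real.sqrt_nonneg D
  have hdisc : (Q * r * (A - 1)) ^ 2 - 4 * (Q ^ 2 * r) * (-(P ^ 2)) = (Q * r) ^ 2 * D := by
    rw [hD_def]; field_simp; ring
  have hsqrt : Real.sqrt ((Q * r * (A - 1)) ^ 2 - 4 * (Q ^ 2 * r) * (-(P ^ 2))) =
      Q * r * Real.sqrt D := by
    rw [hdisc, Real.sqrt_mul (by positivity), Real.sqrt_sq (by positivity)]
  have hthr : (-(Q * r * (A - 1)) + Q * r * Real.sqrt D) / (2 * (Q ^ 2 * r)) =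
      (-(A - 1) + Real.sqrt D) / (2 * Q) := by
    field_simp
  have iff1 : Q * r * X * (Q * X - 1) ≥ P * (P - X * (Q * r - 1) / (r - 1)) ↔
      (-(A - 1) + Real.sqrt D) / (2 * Q) ≤ X := by
    rw [ge_iff_le, ← sub_nonneg, hexpand, key, hsqrt, hthr]
  have hq4 : (0:ℝ) < 4 * (P ^ 2 / r) := by positivity
  have hSgt : A - 1 < Real.sqrt D := by
    by_contra hcon
    push_neg at hcon
    have h1 : 0 ≤ A - 1 := le_trans hS0 hcon
    have h2 : D ≤ (A - 1) ^ 2 := by nlinarith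
    rw [hD_def] at h2
    linarith
  constructor
  · exact iff1
  · rw [iff1]
    have hnum : 0 < Real.sqrt D - A + 1 := by linarith
    have hT : (0:ℝ) < (Real.sqrt D - A + 1) / (2 * Q) := by positivity
    have hre : (-(A - 1) + Real.sqrt D) / (2 * Q) = (Real.sqrt D - A + 1) / (2 * Q) := by ring_nf
    rw [hre, hX_def, ← Real.logb_le_iff_le_rpow hr hT,
      Real.logb_div (by positivity) (by positivity),
      Real.logb_mul (by norm_num) (by positivity), hQ_def,
      Real.logb_rpow hr0 (ne_of_gt hr)]
    constructor <;> intro h <;> linarith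
end
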